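/- Let Γ be the half-lemniscate curve given in polar coordinates by r(θ) = cos(2θ) for |θ| ≤ π/4, and let T be an isosceles triangle with apex angle obtuse, with base AB and apex C, oriented with base vertical and apex to the left. Then no translation and positive homothety of T has all three vertices on Γ; moreover if such an inscribed copy existed, the apex would have to be the origin (the singular point of Γ), by the symmetry of Γ and T under reflection in the horizontal axis, which is impossible since Γ is contained in the sector |θ| ≤ π/4. -/
import Mathlib

open Real Complex

/-- The half-lemniscate `r(θ) = cos 2θ`, `|θ| ≤ π/4`, as a subset of `ℂ`. -/
noncomputable def halfLemniscate : Set ℂ :=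
  {z | ∃ θ ∈ Set.Icc (-(π / 4)) (π / 4),
    z = (Real.cos (2 * θ) : ℝ) * Complex.exp (θ * Complex.I)}

lemma hl_param {z : ℂ} (hz : z ∈ halfLemniscate) :
    ∃ θ : ℝ, |θ| ≤ π/4 ∧ z.re = Real.cos (2*θ) * Real.cos θ ∧
      z.im = Real.cos (2*θ) * Real.sin θ := by
  obtain ⟨θ, hθ, hzeq⟩ := hz
  refine ⟨θ, abs_le.2 ⟨by linarith [hθ.1], hθ.2⟩, ?_, ?_⟩ <;>
    simp [hzeq, Complex.exp_mul_I, Complex.mul_re, Complex.mul_im,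
      ← Complex.ofReal_ofNat, ← Complex.ofReal_mul, Complex.cos_ofReal_re,
      Complex.cos_ofReal_im, Complex.sin_ofReal_re]

lemma cos2_nonneg {θ : ℝ} (hθ : |θ| ≤ π/4) : 0 ≤ Real.cos (2*θ) := by
  rw [abs_le] at hθ
  exact Real.cos_nonneg_of_mem_Icc ⟨by linarith, by linarith⟩

lemma sin_le_cos' {θ : ℝ} (hθ : |θ| ≤ π/4) : |Real.sin θ| ≤ Real.cos θ := by
  have hpi := Real.pi_pos
  have h1 : |Real.sin θ| = Real.sin |θ| := by
    rcases abs_cases θ with ⟨h, h0⟩ | ⟨h, h0⟩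
    · rw [h, _root_.abs_of_nonneg (Real.sin_nonneg_of_nonneg_of_le_pi h0 (by
        rw [abs_le] at hθ; linarith))]
    · rw [h, Real.sin_neg, _root_.abs_of_nonpos
        (Real.sin_nonpos_of_nonpos_of_neg_pi_le (le_of_lt h0) (by
          rw [abs_le] at hθ; linarith))]
  rw [h1, ← Real.cos_abs θ]
  calc Real.sin |θ| ≤ Real.sin (π/4) :=
        Real.strictMonoOn_sin.monotoneOn
          ⟨by linarith [abs_nonneg θ], by linarith [abs_nonneg θ]⟩
          ⟨by linarith, by linarith⟩ hθ
    _ = Real.cos (π/4) := by rw [Real.sin_pi_div_four, Real.cos_pi_div_four]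
    _ ≤ Real.cos |θ| := Real.cos_le_cos_of_nonneg_of_le_pi (abs_nonneg θ)
        (by linarith) hθ

lemma hl_bound {z : ℂ} (hz : z ∈ halfLemniscate) : |z.im| ≤ z.re ∧ z.re ≤ 1 := by
  obtain ⟨θ, hθ, hre, him⟩ := hl_param hz
  have h0 : 0 ≤ Real.cos (2*θ) := cos2_nonneg hθ
  have h1 : |Real.sin θ| ≤ Real.cos θ := sin_le_cos' hθ
  constructor
  · rw [hre, him, abs_mul, _root_.abs_of_nonneg h0]
    exact mul_le_mul_of_nonneg_left h1 h0
  · rw [hre]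
    have := Real.cos_le_one (2*θ)
    have := Real.cos_le_one θ
    have hc : 0 ≤ Real.cos θ := le_trans (abs_nonneg _) h1
    nlinarith

/-- strict monotonicity of the real part along the parametrization -/
lemma X_anti {θ₁ θ₂ : ℝ} (h0 : 0 ≤ θ₁) (h12 : θ₁ < θ₂) (h2 : θ₂ ≤ π/4) :
    Real.cos (2*θ₂) * Real.cos θ₂ < Real.cos (2*θ₁) * Real.cos θ₁ := by
  have hpi := Real.pi_pos
  have ha : Real.cos (2*θ₂) < Real.cos (2*θ₁) :=
    Real.cos_lt_cos_of_nonneg_of_le_pi (by linarith) (by linarith) (by linarith)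
  have hb : 0 ≤ Real.cos (2*θ₂) := cos2_nonneg (by rw [abs_le]; constructor <;> linarith)
  have hc : 0 < Real.cos θ₂ := Real.cos_pos_of_mem_Ioo ⟨by linarith, by linarith⟩
  have hd : Real.cos θ₂ ≤ Real.cos θ₁ :=
    Real.cos_le_cos_of_nonneg_of_le_pi h0 (by linarith) (le_of_lt h12)
  nlinarith

/-- two points of Γ with the same real part are equal or conjugate -/
lemma hl_conj {z w : ℂ} (hz : z ∈ halfLemniscate) (hw : w ∈ halfLemniscate)
    (hre : z.re = w.re) : w = z ∨ w = (starRingEnd ℂ) z := by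
  obtain ⟨θ, hθ, hzre, hzim⟩ := hl_param hz
  obtain ⟨φ, hφ, hwre, hwim⟩ := hl_param hw
  have hX : Real.cos (2*|θ|) * Real.cos |θ| = Real.cos (2*|φ|) * Real.cos |φ| := by
    calc Real.cos (2*|θ|) * Real.cos |θ| = Real.cos (2*θ) * Real.cos θ := by
          rw [Real.cos_abs]; congr 1
          rcases abs_cases θ with ⟨h,_⟩|⟨h,_⟩ <;> rw [h] <;> ring_nf
          exact Real.cos_neg _
      _ = Real.cos (2*φ) * Real.cos φ := by rw [← hzre, hre, hwre]
      _ = Real.cos (2*|φ|) * Real.cos |φ| := by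
          rw [Real.cos_abs]; congr 1
          rcases abs_cases φ with ⟨h,_⟩|⟨h,_⟩ <;> rw [h] <;> ring_nf
          exact (Real.cos_neg _).symm
  have habs : |θ| = |φ| := by
    rcases lt_trichotomy |θ| |φ| with h | h | h
    · exact absurd hX (ne_of_gt (X_anti (abs_nonneg θ) h hφ))
    · exact h
    · exact absurd hX (ne_of_lt (X_anti (abs_nonneg φ) h hθ))
  rcases abs_eq_abs.mp habs with h | h
  · left
    apply Complex.ext
    · rw [hwre, hzre, h]
    · rw [hwim, hzim, h]
  · right
    apply Complex.ext
    · rw [Complex.conj_re, hwre, hzre, h]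
      rw [show 2 * -φ = -(2*φ) by ring, Real.cos_neg, Real.cos_neg]
    · rw [Complex.conj_im, hwim, hzim, h]
      rw [show 2 * -φ = -(2*φ) by ring, Real.cos_neg, Real.sin_neg]
      ring

/-- the only real points of Γ are 0 and 1 -/
lemma hl_real {z : ℂ} (hz : z ∈ halfLemniscate) (him : z.im = 0) :
    z = 0 ∨ z = 1 := by
  have hpi := Real.pi_pos
  obtain ⟨θ, hθ, hzre, hzim⟩ := hl_param hz
  rw [hzim] at him
  rcases mul_eq_zero.mp him with h | h
  · left
    apply Complex.ext <;> simp [hzre, hzim, h]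
  · right
    have : θ = 0 := by
      rw [abs_le] at hθ
      have := Real.sin_eq_zero_iff_of_lt_of_lt (x := θ) (by linarith) (by linarith)
      exact this.mp h
    apply Complex.ext <;> simp [hzre, hzim, this]

/-- An isosceles triangle with vertical base `AB`, apex `C` on the real axis to the left of
the base, and obtuse angle at `C`, cannot be inscribed in the half-lemniscate by a
translation and a positive homothety; moreover any such inscribed copy would have to have
its apex at the origin. -/
theorem stmt_19 (x y cc : ℝ) (hy : 0 < y) (hleft : cc < x)
    (A B C : ℂ) (hA : A = (x : ℂ) + y * Complex.I) (hB : B = (x : ℂ) - y * Complex.I)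
    (hC : C = (cc : ℂ))
    (hobtuse : ((A - C) * (starRingEnd ℂ) (B - C)).re < 0) :
    (¬ ∃ a : ℝ, 0 < a ∧ ∃ b : ℂ,
        a • A + b ∈ halfLemniscate ∧ a • B + b ∈ halfLemniscate ∧
        a • C + b ∈ halfLemniscate) ∧
    (∀ a : ℝ, 0 < a → ∀ b : ℂ,
      a • A + b ∈ halfLemniscate → a • B + b ∈ halfLemniscate →
      a • C + b ∈ halfLemniscate → a • C + b = 0) := by
  rw [hA, hB, hC] at hobtuse
  simp [Complex.mul_re, Complex.sub_re, Complex.sub_im, Complex.add_re, Complex.add_im,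
    Complex.mul_im] at hobtuse
  have hyc : x - cc < y := by nlinarith
  have key : ∀ a : ℝ, 0 < a → ∀ b : ℂ,
      a • A + b ∈ halfLemniscate → a • B + b ∈ halfLemniscate →
      a • C + b ∈ halfLemniscate → a • C + b = 0 := by
    intro a ha b hA' hB' hC'
    have hAre : (a • A + b).re = a * x + b.re := by
      simp [hA, Complex.real_smul, Complex.add_re, Complex.mul_re, Complex.mul_im]
    have hAim : (a • A + b).im = a * y + b.im := by
      simp [hA, Complex.real_smul, Complex.add_im, Complex.mul_re, Complex.mul_im]
    have hBre : (a • B + b).re = a * x + b.re := by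
      simp [hB, Complex.real_smul, Complex.add_re, Complex.mul_re, Complex.mul_im]
    have hBim : (a • B + b).im = -(a * y) + b.im := by
      simp [hB, Complex.real_smul, Complex.add_im, Complex.mul_re, Complex.mul_im]
    have hCre : (a • C + b).re = a * cc + b.re := by
      simp [hC, Complex.real_smul, Complex.add_re, Complex.mul_re, Complex.mul_im]
    have hCim : (a • C + b).im = b.im := by
      simp [hC, Complex.real_smul, Complex.add_im, Complex.mul_re, Complex.mul_im]
    have hbim : b.im = 0 := by
      rcases hl_conj hA' hB' (by rw [hAre, hBre]) with h | h
      · exfalso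
        have := congrArg Complex.im h
        rw [hAim, hBim] at this
        nlinarith
      · have := congrArg Complex.im h
        rw [hBim, Complex.conj_im, hAim] at this
        linarith
    rcases hl_real hC' (by rw [hCim, hbim]) with h | h
    · exact h
    · exfalso
      have h1 := congrArg Complex.re h
      rw [hCre, Complex.one_re] at h1
      have h2 := (hl_bound hA').2
      rw [hAre] at h2
      nlinarith
  refine ⟨?_, key⟩
  rintro ⟨a, ha, b, h1, h2, h3⟩
  have h0 := key a ha b h1 h2 h3
  have hCre : (a • C + b).re = a * cc + b.re := by
    simp [hC, Complex.real_smul, Complex.add_re, Complex.mul_re, Complex.mul_im]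
  have hCim : (a • C + b).im = b.im := by
    simp [hC, Complex.real_smul, Complex.add_im, Complex.mul_re, Complex.mul_im]
  have hre0 : a * cc + b.re = 0 := by rw [← hCre, h0]; simp
  have him0 : b.im = 0 := by rw [← hCim, h0]; simp
  have hAre : (a • A + b).re = a * x + b.re := by
    simp [hA, Complex.real_smul, Complex.add_re, Complex.mul_re, Complex.mul_im]
  have hAim : (a • A + b).im = a * y + b.im := by
    simp [hA, Complex.real_smul, Complex.add_im, Complex.mul_re, Complex.mul_im]
  have hb := (hl_bound h1).1
  rw [hAre, hAim, him0, add_zero] at hb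
  rw [_root_.abs_of_nonneg (by positivity)] at hb
  nlinarith
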